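/- Let p : E → B be a fibration of groupoids, B an object of B, and A an object of the fibre Fib(p,B). Then the orbit of [A] under the Aut_B(B)-action on π₀(Fib(p,B)) equals the set of classes [A'] in π₀(Fib(p,B)) such that A' is isomorphic to A in E. -/

import Mathlib

open CategoryTheory

universe u u'

variable {E : Type u} [Groupoid E] {B : Type u'} [Groupoid B]

/-- A fibration of groupoids: every morphism of the base with target `p.obj e`
lifts to a morphism of the total groupoid with target `e`. -/
def IsGrpdFibration (p : E ⥤ B) : Prop :=
  ∀ (e : E) (b' : B) (h : b' ⟶ p.obj e),
    ∃ (e' : E) (g : e' ⟶ e) (he : p.obj e' = b'), p.map g = eqToHom he ≫ h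

/-- The fibre of a functor of groupoids at an object of the base. -/
structure Fib (p : E ⥤ B) (b : B) where
  pt : E
  isOver : p.obj pt = b

/-- The fibre is a groupoid: morphisms are the morphisms of `E` mapping to the identity. -/
instance fibGroupoid (p : E ⥤ B) (b : B) : Groupoid (Fib p b) where
  Hom a a' := {f : a.pt ⟶ a'.pt // p.map f = eqToHom (a.isOver.trans a'.isOver.symm)}
  id a := ⟨𝟙 a.pt, by simp⟩
  comp f g := ⟨f.1 ≫ g.1, by rw [Functor.map_comp, f.2, g.2, eqToHom_trans]⟩
  id_comp f := Subtype.ext (Category.id_comp f.1)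
  comp_id f := Subtype.ext (Category.comp_id f.1)
  assoc f g h := Subtype.ext (Category.assoc f.1 g.1 h.1)
  inv f := ⟨Groupoid.inv f.1, by
    rw [Groupoid.inv_eq_inv, Functor.map_inv]
    exact IsIso.inv_eq_of_hom_inv_id (by rw [f.2, eqToHom_trans, eqToHom_refl])⟩
  inv_comp f := Subtype.ext (Groupoid.inv_comp f.1)
  comp_inv f := Subtype.ext (Groupoid.comp_inv f.1)

/-! A lift `A_g ⟶ A` of `g : Aut b` is in particular an isomorphism of `E`, so the orbit consists
of classes of objects isomorphic to `A` in `E`. Conversely, an isomorphism `A' ≅ A` of `E` between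
objects over `b` maps to an automorphism of `b`, of which it is a lift, so `[A']` lies in the orbit. -/

namespace Fib

variable {p : E ⥤ B} {b : B}

noncomputable def autOfHom {X Y : Fib p b} (f : X.pt ⟶ Y.pt) : Aut b :=
  asIso (eqToHom X.isOver.symm ≫ p.map f ≫ eqToHom Y.isOver)

theorem map_eq_autOfHom {X Y : Fib p b} (f : X.pt ⟶ Y.pt) :
    p.map f = eqToHom X.isOver ≫ (autOfHom f).hom ≫ eqToHom Y.isOver.symm := by
  simp [autOfHom]

theorem exists_lift_of_isGrpdFibration (hp : IsGrpdFibration p) (g : Aut b) (X : Fib p b) :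
    ∃ (Xg : Fib p b) (f : Xg.pt ⟶ X.pt),
      p.map f = eqToHom Xg.isOver ≫ g.hom ≫ eqToHom X.isOver.symm := by
  obtain ⟨e, f, he, hf⟩ := hp X.pt b (g.hom ≫ eqToHom X.isOver.symm)
  exact ⟨⟨e, he⟩, f, by simpa using hf⟩

end Fib

/-- For a fibration of groupoids and the lifting action of `Aut_B(b)` on `π₀(Fib(p,b))`,
the orbit of the class of an object `A` of the fibre equals the set of classes `[A']` of
objects `A'` of the fibre that are isomorphic to `A` in `E`. -/
theorem orbit_eq_isomorphic_in_total (p : E ⥤ B) (hp : IsGrpdFibration p) (b : B)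
    (act : MulAction (Aut b) (Quotient (isIsomorphicSetoid (Fib p b))))
    (hact : ∀ (g : Aut b) (X Xg : Fib p b) (glift : Xg.pt ⟶ X.pt),
        p.map glift = eqToHom Xg.isOver ≫ g.hom ≫ eqToHom X.isOver.symm →
        act.smul g (Quotient.mk (isIsomorphicSetoid (Fib p b)) X)
          = Quotient.mk (isIsomorphicSetoid (Fib p b)) Xg)
    (A : Fib p b) :
    {x : Quotient (isIsomorphicSetoid (Fib p b)) |
        ∃ g : Aut b, act.smul g (Quotient.mk (isIsomorphicSetoid (Fib p b)) A) = x}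
      = {x : Quotient (isIsomorphicSetoid (Fib p b)) |
          ∃ A' : Fib p b, x = Quotient.mk (isIsomorphicSetoid (Fib p b)) A'
            ∧ Nonempty (A'.pt ≅ A.pt)} := by
  ext x
  constructor
  · rintro ⟨g, rfl⟩
    obtain ⟨Ag, f, hf⟩ := Fib.exists_lift_of_isGrpdFibration hp g A
    exact ⟨Ag, hact g A Ag f hf, ⟨asIso f⟩⟩
  · rintro ⟨A', rfl, ⟨φ⟩⟩
    exact ⟨Fib.autOfHom φ.hom, hact _ A A' φ.hom (Fib.map_eq_autOfHom φ.hom)⟩
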